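/- There are no real numbers $x, y, z$ simultaneously satisfying the four equations: (1) $\tfrac{1}{4}\cos(2x)(3+\cos(2y))\cos(2z) - \sin(2x)\cos(y)\sin(2z) = 0$, (2) $-\tfrac{\sqrt{3}}{2}\cos(2x)\sin^2(y) = 0$, (3) $-\tfrac{\sqrt{3}}{2}\cos(2z)\sin^2(y) = 0$, (4) $\tfrac{1}{4}(1+3\cos(2y)) = 0$. -/

import Mathlib

/-!
Equation (4) forces `cos 2y = -1/3`, so neither `sin y` nor `cos y` vanishes. Then (2) and (3)
give `cos 2x = cos 2z = 0`, hence `sin 2x, sin 2z ≠ 0`, and (1) collapses to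
`sin 2x · cos y · sin 2z = 0`, which is impossible.
-/

open Real

namespace Real

lemma sin_ne_zero_of_cos_eq_zero {a : ℝ} (h : cos a = 0) : sin a ≠ 0 := by
  rw [Ne, sin_eq_zero_iff_cos_eq, h]
  norm_num

lemma cos_ne_zero_of_cos_two_mul_ne_neg_one {a : ℝ} (h : cos (2 * a) ≠ -1) : cos a ≠ 0 := by
  contrapose! h
  rw [cos_two_mul, h]
  norm_num

lemma sin_ne_zero_of_cos_two_mul_ne_one {a : ℝ} (h : cos (2 * a) ≠ 1) : sin a ≠ 0 := by
  contrapose! h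
  rw [cos_two_mul', cos_sq', h]
  norm_num

end Real

/-- There are no real numbers `x, y, z` satisfying simultaneously the four orthogonality
equations arising from flat 2-planes on the Wu manifold. -/
theorem stmt_1 :
    ¬ ∃ x y z : ℝ,
      (1/4) * cos (2*x) * (3 + cos (2*y)) * cos (2*z) - sin (2*x) * cos y * sin (2*z) = 0 ∧
      -(Real.sqrt 3 / 2) * cos (2*x) * (sin y)^2 = 0 ∧
      -(Real.sqrt 3 / 2) * cos (2*z) * (sin y)^2 = 0 ∧
      (1/4) * (1 + 3 * cos (2*y)) = 0 := by
  rintro ⟨x, y, z, h1, h2, h3, h4⟩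
  have hcy : cos (2 * y) = -1 / 3 := by linarith
  have hsin_y : sin y ≠ 0 := sin_ne_zero_of_cos_two_mul_ne_one (by rw [hcy]; norm_num)
  have hcos_y : cos y ≠ 0 := cos_ne_zero_of_cos_two_mul_ne_neg_one (by rw [hcy]; norm_num)
  have hsqrt : Real.sqrt 3 / 2 ≠ 0 := by positivity
  have hcx : cos (2 * x) = 0 := by simpa [hsqrt, hsin_y] using h2
  have hcz : cos (2 * z) = 0 := by simpa [hsqrt, hsin_y] using h3
  rw [hcx, hcz] at h1
  exact mul_ne_zero (mul_ne_zero (sin_ne_zero_of_cos_eq_zero hcx) hcos_y)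
    (sin_ne_zero_of_cos_eq_zero hcz) (by linarith)
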